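/- The number of normal DD-words of degree 3 over an n-letter alphabet is 5n³, and of degree 4 is 14n⁴; in general the count for degree m equals C_m · n^m where C_m is the m-th Catalan number. -/

import Mathlib

/-!
A normal DD-word is a root letter `x` together with an optional left and an optional right
normal DD-word (`x ≺ v`, `x ≻ v` and `(x ≻ u₁) ≻ u₂` supply only a left, only a right, or
both), so normal DD-words of degree `m` are exactly the nonempty `X`-labelled binary trees with
`m` nodes. Splitting a tree at its root gives the recursion
`T(m + 1) = |X| · ∑_{i + j = m} T(i) T(j)`, `T(0) = 1`, which is Catalan's recursion
scaled by `|X| ^ m`.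
-/

/-- Normal `DD`-words over an alphabet `X`: either a letter `x`,
or `x ≺ v`, or `x ≻ v`, or `(x ≻ u₁) ≻ u₂`, with `x` a letter and
`v, u₁, u₂` normal `DD`-words. -/
inductive DDWord (X : Type) where
  | ltr : X → DDWord X
  | precW : X → DDWord X → DDWord X
  | succW : X → DDWord X → DDWord X
  | succ2 : X → DDWord X → DDWord X → DDWord X

/-- The degree of a normal `DD`-word: the number of letter occurrences. -/
def DDWord.deg {X : Type} : DDWord X → ℕ
  | .ltr _ => 1
  | .precW _ v => 1 + v.deg
  | .succW _ v => 1 + v.deg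
  | .succ2 _ u v => 1 + u.deg + v.deg

open Finset

theorem catalan_eq_factorial_div (m : ℕ) :
    catalan m = (2 * m).factorial / ((m + 1).factorial * m.factorial) := by
  rw [catalan_eq_centralBinom_div, Nat.centralBinom_eq_two_mul_choose,
    Nat.choose_eq_factorial_div_factorial (by omega), Nat.div_div_eq_div_mul,
    show 2 * m - m = m by omega, Nat.factorial_succ]
  ring_nf

namespace BinaryTree

variable {α : Type*}

theorem numNodes_eq_zero_iff {t : BinaryTree α} : t.numNodes = 0 ↔ t = nil := by
  cases t <;> simp

def numNodesSuccEquiv (α : Type*) (m : ℕ) :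
    {t : BinaryTree α // t.numNodes = m + 1} ≃
      α × Σ p : antidiagonal m,
        {t : BinaryTree α // t.numNodes = p.1.1} × {t : BinaryTree α // t.numNodes = p.1.2} where
  toFun
    | ⟨node x l r, h⟩ =>
      (x, ⟨⟨(l.numNodes, r.numNodes), mem_antidiagonal.2 (by simpa using h)⟩, ⟨l, rfl⟩, ⟨r, rfl⟩⟩)
  invFun
    | (x, ⟨p, ⟨l, hl⟩, ⟨r, hr⟩⟩) =>
      ⟨node x l r, by simp [hl, hr, (mem_antidiagonal.1 p.2 : p.1.1 + p.1.2 = m)]⟩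
  left_inv
    | ⟨node _ _ _, _⟩ => rfl
  right_inv
    | (_, ⟨⟨(_, _), _⟩, ⟨_, rfl⟩, ⟨_, rfl⟩⟩) => rfl

theorem finite_numNodes_eq [Finite α] (m : ℕ) :
    Finite {t : BinaryTree α // t.numNodes = m} := by
  induction m using Nat.strong_induction_on with
  | _ m ih =>
    cases m with
    | zero =>
      exact Finite.of_equiv _ (Equiv.subtypeEquivRight fun _ => numNodes_eq_zero_iff).symm
    | succ m =>
      have (p : antidiagonal m) := ih p.1.1 (by have := mem_antidiagonal.1 p.2; omega)
      have (p : antidiagonal m) := ih p.1.2 (by have := mem_antidiagonal.1 p.2; omega)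
      exact Finite.of_equiv _ (numNodesSuccEquiv α m).symm

theorem card_numNodes_eq [Finite α] (m : ℕ) :
    Nat.card {t : BinaryTree α // t.numNodes = m} = catalan m * Nat.card α ^ m := by
  induction m using Nat.strong_induction_on with
  | _ m ih =>
    cases m with
    | zero =>
      rw [catalan_zero, pow_zero, one_mul, Nat.card_congr
        (Equiv.subtypeEquivRight fun t : BinaryTree α => numNodes_eq_zero_iff), Nat.card_unique]
    | succ m =>
      have (k : ℕ) := finite_numNodes_eq (α := α) k
      rw [Nat.card_congr (numNodesSuccEquiv α m), Nat.card_prod, Nat.card_sigma,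
        sum_coe_sort (antidiagonal m) fun p => Nat.card
          ({t : BinaryTree α // t.numNodes = p.1} × {t : BinaryTree α // t.numNodes = p.2}),
        catalan_succ', Finset.sum_mul, Finset.mul_sum]
      refine Finset.sum_congr rfl fun p hp => ?_
      rw [HasAntidiagonal.mem_antidiagonal] at hp
      rw [Nat.card_prod, ih p.1 (by omega), ih p.2 (by omega), ← hp]
      ring

end BinaryTree

namespace DDWord

open BinaryTree

variable {X : Type}

def toBinaryTree : DDWord X → BinaryTree X
  | ltr x => node x nil nil
  | precW x v => node x v.toBinaryTree nil
  | succW x v => node x nil v.toBinaryTree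
  | succ2 x u v => node x u.toBinaryTree v.toBinaryTree

@[simp]
theorem toBinaryTree_ne_nil (w : DDWord X) : w.toBinaryTree ≠ nil := by
  cases w <;> simp [toBinaryTree]

@[simp]
theorem numNodes_toBinaryTree (w : DDWord X) : w.toBinaryTree.numNodes = w.deg := by
  induction w <;> simp [toBinaryTree, deg, *] <;> omega

theorem toBinaryTree_injective : Function.Injective (toBinaryTree : DDWord X → BinaryTree X) := by
  intro w w' h
  induction w generalizing w' <;> cases w' <;>
    grind [toBinaryTree, toBinaryTree_ne_nil]

theorem exists_toBinaryTree_eq {t : BinaryTree X} (ht : t ≠ nil) :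
    ∃ w : DDWord X, w.toBinaryTree = t := by
  induction t with
  | nil => exact (ht rfl).elim
  | node x l r ihl ihr =>
    rcases eq_or_ne l nil with rfl | hl <;> rcases eq_or_ne r nil with rfl | hr
    · exact ⟨ltr x, rfl⟩
    · obtain ⟨v, rfl⟩ := ihr hr
      exact ⟨succW x v, rfl⟩
    · obtain ⟨u, rfl⟩ := ihl hl
      exact ⟨precW x u, rfl⟩
    · obtain ⟨u, rfl⟩ := ihl hl
      obtain ⟨v, rfl⟩ := ihr hr
      exact ⟨succ2 x u v, rfl⟩

theorem card_deg_eq [Finite X] {m : ℕ} (hm : m ≠ 0) :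
    Nat.card {w : DDWord X // w.deg = m} = catalan m * Nat.card X ^ m := by
  rw [← card_numNodes_eq]
  refine Nat.card_congr (Equiv.ofBijective (fun w => ⟨w.1.toBinaryTree, by simp [w.2]⟩) ⟨?_, ?_⟩)
  · exact fun w w' h => Subtype.ext (toBinaryTree_injective (congrArg Subtype.val h))
  · rintro ⟨t, ht⟩
    obtain ⟨w, rfl⟩ := exists_toBinaryTree_eq (mt numNodes_eq_zero_iff.2 (ht ▸ hm))
    exact ⟨⟨w, by simpa using ht⟩, rfl⟩

end DDWord

/-- The number of normal `DD`-words of degree 3 over an `n`-letter alphabet is `5n³`,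
of degree 4 is `14n⁴`, and in general the count in degree `m ≥ 1` is `C_m · n^m`
where `C_m = (2m)!/((m+1)!·m!)` is the `m`-th Catalan number. -/
theorem card_normal_DDwords_deg3_deg4 (n : ℕ) :
    Nat.card {w : DDWord (Fin n) // w.deg = 3} = 5 * n ^ 3 ∧
    Nat.card {w : DDWord (Fin n) // w.deg = 4} = 14 * n ^ 4 ∧
    ∀ m : ℕ, 1 ≤ m →
      Nat.card {w : DDWord (Fin n) // w.deg = m}
        = (2 * m).factorial / ((m + 1).factorial * m.factorial) * n ^ m := by
  have card_eq {m : ℕ} (hm : m ≠ 0) :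
      Nat.card {w : DDWord (Fin n) // w.deg = m} = catalan m * n ^ m := by
    rw [DDWord.card_deg_eq hm, Nat.card_fin]
  refine ⟨?_, ?_, fun m hm => ?_⟩
  · rw [card_eq three_ne_zero, catalan_three]
  · rw [card_eq four_ne_zero, catalan_eq_factorial_div]
    norm_num [Nat.factorial]
  · rw [card_eq (by omega), catalan_eq_factorial_div]
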